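/- Let p and q be nonzero integers. Then there is a group isomorphism from the group L_{p,q} with presentation < a, b, t | t a^p t^{-1} = b^{-1} a^p, t b^{-q} a^{-1} t^{-1} = b^{-q} > to the group W_{p,q} with presentation < x, y | ((yx)^q (xy)^{-q})^p y = x^{-1} ((yx)^q (xy)^{-q})^p > which sends b to x y and sends t to y^{-1}. -/

import Mathlib

/-- The relators of the presentation
`< a, b, t | t a^p t⁻¹ = b⁻¹ a^p, t b^{-q} a⁻¹ t⁻¹ = b^{-q} >` of the knot group of the
double twist knot `K_{p,q}`, where `a`, `b`, `t` are the generators `0`, `1`, `2`. -/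
def lpqRels (p q : ℤ) : Set (FreeGroup (Fin 3)) :=
  let a : FreeGroup (Fin 3) := FreeGroup.of 0
  let b : FreeGroup (Fin 3) := FreeGroup.of 1
  let t : FreeGroup (Fin 3) := FreeGroup.of 2
  { t * a ^ p * t⁻¹ * (b⁻¹ * a ^ p)⁻¹,
    t * b ^ (-q) * a⁻¹ * t⁻¹ * (b ^ (-q))⁻¹ }

/-- The group `L_{p,q}`. -/
abbrev Lpq (p q : ℤ) := PresentedGroup (lpqRels p q)

/-- The relator of the presentation
`< x, y | ((yx)^q (xy)^{-q})^p y = x⁻¹ ((yx)^q (xy)^{-q})^p >` of the knot group of the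
double twist knot `K_{p,q}`, where `x`, `y` are the generators `0`, `1`. -/
def wpqRels (p q : ℤ) : Set (FreeGroup (Fin 2)) :=
  let x : FreeGroup (Fin 2) := FreeGroup.of 0
  let y : FreeGroup (Fin 2) := FreeGroup.of 1
  { ((y * x) ^ q * (x * y) ^ (-q)) ^ p * y *
      (x⁻¹ * ((y * x) ^ q * (x * y) ^ (-q)) ^ p)⁻¹ }

/-- The group `W_{p,q}`. -/
abbrev Wpq (p q : ℤ) := PresentedGroup (wpqRels p q)

/-! The second relation of `L_{p,q}` says `a = t⁻¹ b^q t b^{-q}`, so `a` is a redundant generator.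
Substituting `b = xy`, `t = y⁻¹` turns this word into `(yx)^q (xy)^{-q}` and the first relation
into the relator of `W_{p,q}`; conversely `x = bt`, `y = t⁻¹` carries the relator of `W_{p,q}`
back to the first relation. The two substitutions are mutually inverse on generators. -/

section

variable {G : Type*} [Group G]

def SatisfiesLpqRels (p q : ℤ) (a b t : G) : Prop :=
  t * a ^ p * t⁻¹ = b⁻¹ * a ^ p ∧ t * b ^ (-q) * a⁻¹ * t⁻¹ = b ^ (-q)

def wpqWord (q : ℤ) (x y : G) : G :=
  (y * x) ^ q * (x * y) ^ (-q)

def SatisfiesWpqRels (p q : ℤ) (x y : G) : Prop :=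
  wpqWord q x y ^ p * y = x⁻¹ * wpqWord q x y ^ p

theorem map_wpqWord {H : Type*} [Group H] (f : G →* H) (q : ℤ) (x y : G) :
    f (wpqWord q x y) = wpqWord q (f x) (f y) := by
  simp only [wpqWord, map_mul, map_zpow]

theorem inv_conj_zpow (b t : G) (n : ℤ) : (t⁻¹ * b * t) ^ n = t⁻¹ * b ^ n * t := by
  simpa using conj_zpow (a := t⁻¹) (b := b) (i := n)

namespace SatisfiesLpqRels

variable {p q : ℤ} {a b t : G}

theorem eq_conj_mul (h : SatisfiesLpqRels p q a b t) : a = t⁻¹ * b ^ q * t * b ^ (-q) :=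
  calc a = t⁻¹ * (t * b ^ (-q) * a⁻¹ * t⁻¹)⁻¹ * t * b ^ (-q) := by group
    _ = t⁻¹ * b ^ q * t * b ^ (-q) := by rw [h.2]; group

theorem wpqWord_eq (h : SatisfiesLpqRels p q a b t) : wpqWord q (b * t) t⁻¹ = a := by
  rw [wpqWord, h.eq_conj_mul, ← mul_assoc, inv_conj_zpow, mul_inv_cancel_right]

theorem satisfiesWpqRels (h : SatisfiesLpqRels p q a b t) :
    SatisfiesWpqRels p q (b * t) t⁻¹ := by
  rw [SatisfiesWpqRels, h.wpqWord_eq, mul_inv_rev, mul_assoc t⁻¹, ← h.1]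
  group

end SatisfiesLpqRels

theorem SatisfiesWpqRels.satisfiesLpqRels {p q : ℤ} {x y : G} (h : SatisfiesWpqRels p q x y) :
    SatisfiesLpqRels p q (wpqWord q x y) (x * y) y⁻¹ := by
  have hyx : (y * x) ^ q = y * (x * y) ^ q * y⁻¹ := by
    rw [← conj_zpow]; group
  constructor
  · rw [inv_inv, mul_assoc, h, mul_inv_rev]; group
  · rw [wpqWord, hyx]; group

namespace Lpq

variable {p q : ℤ}

theorem lift_eq_one_of_mem_rels {a b t : G} (h : SatisfiesLpqRels p q a b t) :
    ∀ r ∈ lpqRels p q, FreeGroup.lift ![a, b, t] r = 1 := by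
  rintro r (rfl | rfl) <;>
    simp only [map_mul, map_zpow, map_inv, FreeGroup.lift_apply_of, mul_inv_eq_one]
  exacts [h.1, h.2]

def lift {a b t : G} (h : SatisfiesLpqRels p q a b t) : Lpq p q →* G :=
  PresentedGroup.toGroup (lift_eq_one_of_mem_rels h)

@[simp]
theorem lift_of {a b t : G} (h : SatisfiesLpqRels p q a b t) (i : Fin 3) :
    lift h (.of i) = ![a, b, t] i :=
  PresentedGroup.toGroup.of _

theorem satisfiesLpqRels_of : SatisfiesLpqRels p q (.of 0 : Lpq p q) (.of 1) (.of 2) := by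
  constructor <;>
  · refine PresentedGroup.mk_eq_mk_of_mul_inv_mem ?_
    simp [lpqRels]

end Lpq

namespace Wpq

variable {p q : ℤ}

theorem lift_eq_one_of_mem_rels {x y : G} (h : SatisfiesWpqRels p q x y) :
    ∀ r ∈ wpqRels p q, FreeGroup.lift ![x, y] r = 1 := by
  rintro r rfl
  simp only [map_mul, map_zpow, map_inv, FreeGroup.lift_apply_of, mul_inv_eq_one]
  exact h

def lift {x y : G} (h : SatisfiesWpqRels p q x y) : Wpq p q →* G :=
  PresentedGroup.toGroup (lift_eq_one_of_mem_rels h)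

@[simp]
theorem lift_of {x y : G} (h : SatisfiesWpqRels p q x y) (i : Fin 2) :
    lift h (.of i) = ![x, y] i :=
  PresentedGroup.toGroup.of _

theorem satisfiesWpqRels_of : SatisfiesWpqRels p q (.of 0 : Wpq p q) (.of 1) :=
  PresentedGroup.mk_eq_mk_of_mul_inv_mem (by simp [wpqRels])

end Wpq

end

theorem lpq_iso_wpq_general (p q : ℤ) :
    letI x : Wpq p q := PresentedGroup.of 0
    letI y : Wpq p q := PresentedGroup.of 1
    ∃ φ : Lpq p q ≃* Wpq p q,
      φ (PresentedGroup.of 1) = x * y ∧ φ (PresentedGroup.of 2) = y⁻¹ := by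
  have hL := Lpq.satisfiesLpqRels_of (p := p) (q := q)
  have hW := Wpq.satisfiesWpqRels_of (p := p) (q := q)
  let φ := Lpq.lift hW.satisfiesLpqRels
  let ψ := Wpq.lift hL.satisfiesWpqRels
  have hψφ : ψ.comp φ = .id _ := PresentedGroup.ext fun i => by
    fin_cases i
    · simpa [φ, ψ, map_wpqWord] using hL.wpqWord_eq
    all_goals simp [φ, ψ]
  have hφψ : φ.comp ψ = .id _ := PresentedGroup.ext fun i => by
    fin_cases i <;> simp [φ, ψ]
  exact ⟨φ.toMulEquiv ψ hψφ hφψ, by simp [φ], by simp [φ]⟩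

/-- there is an isomorphism `L_{p,q} ≃* W_{p,q}` sending `b` to `x y` and
`t` to `y⁻¹`. -/
theorem lpq_iso_wpq (p q : ℤ) (hp : p ≠ 0) (hq : q ≠ 0) :
    letI x : Wpq p q := PresentedGroup.of 0
    letI y : Wpq p q := PresentedGroup.of 1
    ∃ φ : Lpq p q ≃* Wpq p q,
      φ (PresentedGroup.of 1) = x * y ∧ φ (PresentedGroup.of 2) = y⁻¹ :=
  lpq_iso_wpq_general p q
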